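/- arXiv:1410.4085 — 2 statements merged into one kernel-verified Lean document; each statement's English description precedes it below -/
import Mathlib

section
/- For every word v of length k over {a,b}, k + 2 ≤ |ψ(v)| + 2 ≤ F_{k+1}, where (F_k) is the Fibonacci sequence with F_{−1} = F_0 = 1 and F_{n+1} = F_n + F_{n−1}. The lower bound is attained if and only if v is constant (a power of a single letter), and the upper bound is attained if and only if v is alternating (every letter of v is immediately followed in v by the other letter). -/
/-- Stern's diatomic sequence. -/
def stern : ℕ → ℕ
  | 0 => 0
  | 1 => 1
  | n + 2 =>
      if (n + 2) % 2 = 0 then stern ((n + 2) / 2)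
      else stern ((n + 2) / 2) + stern ((n + 2) / 2 + 1)
decreasing_by all_goals omega

/-- Shortest palindrome having `w` as a prefix (right palindromic closure). -/
def palClosure (w : List Bool) : List Bool :=
  let d := Nat.find (p := fun d => (w.drop d).reverse = w.drop d)
    ⟨w.length, by simp⟩
  w ++ (w.take d).reverse

/-- Iterated palindromic closure (palindromization map ψ). -/
def psi (v : List Bool) : List Bool :=
  v.foldl (fun w x => palClosure (w ++ [x])) []

/-- Minimal period of a word (`1` for the empty word). -/
def minPeriod (w : List Bool) : ℕ :=
  Nat.find (p := fun p => 1 ≤ p ∧ ∀ i < w.length, i + p < w.length → w[i]? = w[i + p]?)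
    ⟨w.length + 1, by omega, fun i _ h => absurd h (by omega)⟩

/-- The morphism μ_x on a single letter. -/
def muLetter (x y : Bool) : List Bool := if y = x then [x] else [x, y]

/-- Action of μ_x on a word. -/
def muL (x : Bool) (w : List Bool) : List Bool := w.flatMap (muLetter x)

/-- μ_v = μ_{x₁} ∘ ⋯ ∘ μ_{xₙ} for v = x₁⋯xₙ. -/
def muWord (v : List Bool) (w : List Bool) : List Bool := v.foldr muL w

/-- Fibonacci numbers shifted: `fibD k = F_{k-1}` where F_{-1}=F_0=1. -/
def fibD : ℕ → ℕ
  | 0 => 1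
  | 1 => 1
  | n + 2 => fibD (n + 1) + fibD n

/-- Head-recursion helper for continuants. -/
def khead : List ℤ → ℤ
  | [] => 1
  | [a] => a
  | a :: b :: t => a * khead (b :: t) + khead t

/-- Continuant K[a₀,…,aₙ]: K[]=1, K[a₀]=a₀, K[a₀,…,aₙ]=aₙK[a₀,…,a_{n-1}]+K[a₀,…,a_{n-2}]. -/
def contK (l : List ℤ) : ℤ := khead l.reverse

/-- Value of a little-endian list of binary digits. -/
def ofBits (l : List Bool) : ℕ := l.foldr (fun b n => 2 * n + (if b then 1 else 0)) 0

/-- The integer obtained by reversing the binary expansion of `n`. -/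
def binRev (n : ℕ) : ℕ := ofBits n.bits.reverse

/-- The word b(ab)^m over {a,b} ≃ {false,true}. -/
def altPat : ℕ → List Bool
  | 0 => [true]
  | m + 1 => altPat m ++ [false, true]




def pd (w : List Bool) : ℕ :=
  Nat.find (p := fun d => (w.drop d).reverse = w.drop d) ⟨w.length, by simp⟩

lemma palClosure_eq (w : List Bool) : palClosure w = w ++ (w.take (pd w)).reverse := rfl

lemma pd_spec (w : List Bool) : (w.drop (pd w)).reverse = w.drop (pd w) :=
  Nat.find_spec (p := fun d => (w.drop d).reverse = w.drop d) ⟨w.length, by simp⟩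

lemma pd_le' (w : List Bool) {e : ℕ} (h : (w.drop e).reverse = w.drop e) : pd w ≤ e :=
  Nat.find_min' _ h

lemma pd_le (w : List Bool) : pd w ≤ w.length := pd_le' w (by simp)

lemma length_palClosure (w : List Bool) : (palClosure w).length = w.length + pd w := by
  rw [palClosure_eq]
  simp [List.length_take, Nat.min_eq_left (pd_le w)]

lemma prefix_palClosure (w : List Bool) : w <+: palClosure w := ⟨_, (palClosure_eq w).symm⟩

lemma reverse_palClosure (w : List Bool) : (palClosure w).reverse = palClosure w := by
  rw [palClosure_eq]
  conv_lhs => rw [show w = w.take (pd w) ++ w.drop (pd w) from (List.take_append_drop _ _).symm]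
  rw [List.reverse_append, List.reverse_append, List.reverse_reverse, pd_spec]
  rw [← List.append_assoc, List.take_append_drop]
  rw [List.take_append_drop]

lemma drop_pal_of_pal {w t : List Bool} (hp : (w ++ t).reverse = w ++ t)
    (he : t.length ≤ w.length) : (w.drop t.length).reverse = w.drop t.length := by
  have h := hp
  rw [List.reverse_append] at h
  have h2 : w.reverse = w.drop t.length ++ t := by
    have h5 := congrArg (List.drop t.length) h
    rwa [List.drop_left' (by simp : t.reverse.length = t.length),
      List.drop_append, Nat.sub_eq_zero_of_le he, List.drop_zero] at h5
  have h3 : w = t.reverse ++ (w.drop t.length).reverse := by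
    have := congrArg List.reverse h2
    simpa using this
  have h6 := congrArg (List.drop t.length) h3
  rw [List.drop_left' (by simp : t.reverse.length = t.length)] at h6
  exact h6.symm

lemma pal_prefix_length_ge {p w : List Bool} (hp : p.reverse = p) (hw : w <+: p) :
    (palClosure w).length ≤ p.length := by
  obtain ⟨t, rfl⟩ := hw
  rcases le_or_gt t.length w.length with he | he
  · have := pd_le' w (drop_pal_of_pal hp he)
    rw [length_palClosure]
    simp only [List.length_append]
    omega
  · rw [length_palClosure]
    have := pd_le w
    simp only [List.length_append]
    omega

lemma pal_prefix_eq {p w : List Bool} (hp : p.reverse = p) (hw : w <+: p)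
    (hl : p.length = (palClosure w).length) : p = palClosure w := by
  obtain ⟨t, rfl⟩ := hw
  have hlen : t.length = pd w := by
    rw [length_palClosure] at hl; simp only [List.length_append] at hl; omega
  have he : t.length ≤ w.length := hlen ▸ pd_le w
  have h := hp
  rw [List.reverse_append] at h
  have h2 : w.reverse = w.drop t.length ++ t := by
    have h5 := congrArg (List.drop t.length) h
    rwa [List.drop_left' (by simp : t.reverse.length = t.length),
      List.drop_append, Nat.sub_eq_zero_of_le he, List.drop_zero] at h5
  have h4 : w.reverse = w.drop t.length ++ (w.take t.length).reverse := by
    conv_lhs => rw [show w = w.take t.length ++ w.drop t.length from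
      (List.take_append_drop _ _).symm]
    rw [List.reverse_append, hlen, pd_spec]
  have ht : t = (w.take t.length).reverse := List.append_cancel_left (h2.symm.trans h4)
  rw [palClosure_eq, ← hlen, ← ht]

lemma palClosure_of_palindrome {w : List Bool} (h : w.reverse = w) : palClosure w = w := by
  have : pd w = 0 := Nat.le_zero.mp (pd_le' w (by simpa using h))
  rw [palClosure_eq, this]
  simp

lemma palClosure_sandwich {w w' : List Bool} (h1 : w <+: w') (h2 : w' <+: palClosure w) :
    palClosure w' = palClosure w := by
  have hA : (palClosure w').length ≤ (palClosure w).length :=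
    pal_prefix_length_ge (reverse_palClosure w) h2
  have hB : (palClosure w).length ≤ (palClosure w').length :=
    pal_prefix_length_ge (reverse_palClosure w') (h1.trans (prefix_palClosure w'))
  exact pal_prefix_eq (reverse_palClosure w') (h1.trans (prefix_palClosure w'))
    (le_antisymm hA hB)


@[simp] lemma muL_nil (x : Bool) : muL x [] = [] := rfl

@[simp] lemma muL_cons (x c : Bool) (t : List Bool) :
    muL x (c :: t) = muLetter x c ++ muL x t := rfl

@[simp] lemma muL_append (x : Bool) (u v : List Bool) :
    muL x (u ++ v) = muL x u ++ muL x v := by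
  simp [muL]

lemma muLetter_self (x : Bool) : muLetter x x = [x] := by simp [muLetter]

lemma muLetter_other {x c : Bool} (h : c ≠ x) : muLetter x c = [x, c] := by
  simp [muLetter, h]

lemma length_muL (x : Bool) (w : List Bool) :
    (muL x w).length = w.length + w.count (!x) := by
  induction w with
  | nil => rfl
  | cons c t ih =>
    rcases eq_or_ne c x with rfl | h
    · simp [muLetter_self, ih, List.count_cons]
      omega
    · have hc : c = !x := by revert h; cases c <;> cases x <;> decide
      subst hc
      simp [muLetter_other h, ih, List.count_cons]
      omega

lemma count_muL_self (x : Bool) (w : List Bool) : (muL x w).count x = w.length := by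
  induction w with
  | nil => rfl
  | cons c t ih =>
    rcases eq_or_ne c x with rfl | h
    · simp [muLetter_self, ih, List.count_cons]
    · simp [muLetter_other h, ih, List.count_cons, List.count_append, h]

lemma count_muL_other (x : Bool) (w : List Bool) : (muL x w).count (!x) = w.count (!x) := by
  induction w with
  | nil => rfl
  | cons c t ih =>
    rcases eq_or_ne c x with rfl | h
    · simp [muLetter_self, ih, List.count_cons]
    · have hc : c = !x := by revert h; cases c <;> cases x <;> decide
      subst hc
      simp [muLetter_other h, ih, List.count_cons, List.count_append]

lemma muL_eq_nil_iff {x : Bool} {w : List Bool} : muL x w = [] ↔ w = [] := by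
  cases w with
  | nil => simp
  | cons c t =>
    simp only [muL_cons]
    constructor
    · intro h
      rcases eq_or_ne c x with rfl | hne
      · simp [muLetter_self] at h
      · simp [muLetter_other hne] at h
    · intro h; exact absurd h (by simp)

lemma muL_head {x : Bool} {w : List Bool} (h : w ≠ []) : ∃ t, muL x w = x :: t := by
  cases w with
  | nil => exact absurd rfl h
  | cons c t =>
    by_cases hc : c = x
    · subst hc
      exact ⟨muL c t, by simp [muLetter_self]⟩
    · exact ⟨c :: muL x t, by simp [muLetter_other hc]⟩

lemma rev_muL (x : Bool) (w : List Bool) :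
    x :: (muL x w).reverse = muL x w.reverse ++ [x] := by
  induction w with
  | nil => rfl
  | cons c t ih =>
    have hc : x :: (muLetter x c).reverse = muLetter x c ++ [x] := by
      rcases eq_or_ne c x with rfl | hne
      · simp [muLetter_self]
      · simp [muLetter_other hne]
    calc x :: (muL x (c :: t)).reverse
        = (x :: (muL x t).reverse) ++ (muLetter x c).reverse := by simp
      _ = (muL x t.reverse ++ [x]) ++ (muLetter x c).reverse := by rw [ih]
      _ = muL x t.reverse ++ (x :: (muLetter x c).reverse) := by simp
      _ = muL x t.reverse ++ (muLetter x c ++ [x]) := by rw [hc]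
      _ = muL x (c :: t).reverse ++ [x] := by simp

lemma muL_head_ne {x z : Bool} (hz : z ≠ x) (t s : List Bool) : muL x t ≠ z :: s := by
  intro h
  cases t with
  | nil => simp at h
  | cons c r =>
    obtain ⟨q, hq⟩ := muL_head (x := x) (w := c :: r) (by simp)
    rw [hq] at h
    injection h with h1 _
    exact hz h1.symm

lemma muL_injective {x : Bool} : ∀ {w w' : List Bool}, muL x w = muL x w' → w = w' := by
  intro w
  induction w with
  | nil =>
    intro w' h
    exact (muL_eq_nil_iff.mp (h.symm.trans (muL_nil x))).symm
  | cons c t ih =>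
    intro w' h
    cases w' with
    | nil => exact absurd (muL_eq_nil_iff.mp (h.trans (muL_nil x))) (by simp)
    | cons c' t' =>
      rcases eq_or_ne c c' with rfl | hne
      · rw [muL_cons, muL_cons, List.append_cancel_left_eq] at h
        rw [ih h]
      · exfalso
        by_cases hcx : c = x
        · have hc' : c' ≠ x := by rw [← hcx]; exact fun hh => hne hh.symm
          rw [muL_cons, muL_cons, hcx, muLetter_self, muLetter_other hc'] at h
          simp only [List.cons_append, List.nil_append, List.cons.injEq] at h
          exact muL_head_ne hc' t (muL x t') h.2
        · rw [muL_cons, muL_cons, muLetter_other hcx] at h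
          by_cases hc'x : c' = x
          · rw [hc'x, muLetter_self] at h
            simp only [List.cons_append, List.nil_append, List.cons.injEq] at h
            exact muL_head_ne hcx t' (muL x t) h.2.symm
          · rw [muLetter_other hc'x] at h
            simp only [List.cons_append, List.nil_append, List.cons.injEq] at h
            exact hne h.2.1

lemma pal_muL_iff {x : Bool} {w : List Bool} :
    (muL x w ++ [x]).reverse = muL x w ++ [x] ↔ w.reverse = w := by
  have h1 : (muL x w ++ [x]).reverse = muL x w.reverse ++ [x] := by
    rw [List.reverse_append, List.reverse_singleton, List.singleton_append, rev_muL]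
  rw [h1]
  constructor
  · intro h
    exact muL_injective (List.append_cancel_right h)
  · intro h; rw [h]

lemma suffix_head_x {x : Bool} {V A S : List Bool} (h : V ++ [x] = A ++ S)
    (hS : S ≠ []) (hpal : S.reverse = S) : S.head? = some x := by
  have hr := congrArg List.reverse h
  rw [List.reverse_append, List.reverse_append, List.reverse_singleton,
    List.singleton_append] at hr
  -- hr : x :: V.reverse = S.reverse ++ A.reverse
  rw [hpal] at hr
  cases S with
  | nil => exact absurd rfl hS
  | cons s ss =>
    simp only [List.cons_append, List.cons.injEq] at hr
    rw [hr.1]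
    rfl

lemma struct {x : Bool} : ∀ (w A S : List Bool), muL x w ++ [x] = A ++ S → S ≠ [] →
    S.reverse = S → ∃ e, A = muL x (w.take e) ∧ S = muL x (w.drop e) ++ [x] := by
  intro w
  induction w with
  | nil =>
    intro A S h hS hpal
    cases A with
    | nil => exact ⟨0, rfl, by simpa using h.symm⟩
    | cons a A' =>
      exfalso
      simp only [muL_nil, List.nil_append, List.cons_append] at h
      injection h with h1 h2
      exact hS (List.append_eq_nil_iff.mp h2.symm).2
  | cons c t ih =>
    intro A S h hS hpal
    cases A with
    | nil => exact ⟨0, rfl, by simpa using h.symm⟩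
    | cons a A' =>
      have hhead : S.head? = some x :=
        suffix_head_x (V := muL x (c :: t)) (A := a :: A') h hS hpal
      by_cases hc : c = x
      · subst hc
        rw [muL_cons, muLetter_self] at h
        simp only [List.cons_append, List.singleton_append, List.cons.injEq] at h
        obtain ⟨hca, h2⟩ := h
        subst hca
        obtain ⟨e, hA, hSe⟩ := ih A' S h2 hS hpal
        exact ⟨e + 1, by simp [muLetter_self, hA], by simpa using hSe⟩
      · rw [muL_cons, muLetter_other hc] at h
        simp only [List.cons_append, List.nil_append, List.cons.injEq] at h
        obtain ⟨hxa, h2⟩ := h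
        subst hxa
        cases A' with
        | nil =>
          exfalso
          simp only [List.nil_append] at h2
          have hd : S.head? = some c := by rw [← h2]; rfl
          rw [hhead] at hd
          exact hc (by injection hd with hh; exact hh.symm)
        | cons b A'' =>
          simp only [List.cons_append, List.cons.injEq] at h2
          obtain ⟨hcb, h3⟩ := h2
          subst hcb
          obtain ⟨e, hA, hSe⟩ := ih A'' S h3 hS hpal
          exact ⟨e + 1, by simp [muLetter_other hc, hA], by simpa using hSe⟩

lemma length_muL_rev (x : Bool) (s : List Bool) :
    (muL x s.reverse).length = (muL x s).length := by
  rw [length_muL, length_muL, List.length_reverse, List.count_reverse]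

lemma key (x : Bool) (w : List Bool) :
    palClosure (muL x w ++ [x]) = muL x (palClosure w) ++ [x] := by
  have hRpal : (muL x (palClosure w) ++ [x]).reverse = muL x (palClosure w) ++ [x] :=
    pal_muL_iff.mpr (reverse_palClosure w)
  rcases Nat.eq_zero_or_pos (pd w) with hd0 | hdpos
  · have hwpal : w.reverse = w := by have := pd_spec w; rwa [hd0, List.drop_zero] at this
    rw [palClosure_of_palindrome hwpal, palClosure_of_palindrome (pal_muL_iff.mpr hwpal)]
  · have hpre : muL x w ++ [x] <+: muL x (palClosure w) ++ [x] := by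
      rw [palClosure_eq, muL_append]
      obtain ⟨r, hr⟩ := muL_head (x := x) (w := (w.take (pd w)).reverse) (by
        intro hnil
        have h0 : (w.take (pd w)).length = 0 := by
          rw [← List.length_reverse, hnil]; rfl
        rw [List.length_take] at h0
        have := pd_le w
        omega)
      rw [hr]
      exact ⟨r ++ [x], by simp⟩
    have h1 : (palClosure (muL x w ++ [x])).length ≤ (muL x (palClosure w) ++ [x]).length :=
      pal_prefix_length_ge hRpal hpre
    have hle : pd (muL x w ++ [x]) ≤ (muL x w).length :=
      pd_le' _ (by rw [List.drop_left]; rfl)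
    have hSnil : (muL x w ++ [x]).drop (pd (muL x w ++ [x])) ≠ [] := by
      intro hnil
      rw [List.drop_eq_nil_iff] at hnil
      simp only [List.length_append, List.length_singleton] at hnil
      omega
    obtain ⟨e, hA, hSe⟩ := struct w ((muL x w ++ [x]).take (pd (muL x w ++ [x])))
      ((muL x w ++ [x]).drop (pd (muL x w ++ [x])))
      (List.take_append_drop _ _).symm hSnil (pd_spec _)
    have hepal : (w.drop e).reverse = w.drop e := pal_muL_iff.mp (hSe ▸ pd_spec _)
    have hde : pd w ≤ e := pd_le' w hepal
    have hlen2 : (muL x (w.take (pd w))).length ≤ pd (muL x w ++ [x]) := by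
      have htk : w.take e = w.take (pd w) ++ (w.drop (pd w)).take (e - pd w) := by
        rw [← List.take_add, Nat.add_sub_cancel' hde]
      have hA' : ((muL x w ++ [x]).take (pd (muL x w ++ [x]))).length
          = (muL x (w.take e)).length := by rw [hA]
      rw [List.length_take, htk, muL_append] at hA'
      simp only [List.length_append] at hA'
      have hpu := pd_le (muL x w ++ [x])
      simp only [List.length_append, List.length_singleton] at hpu
      omega
    have h2 : (muL x (palClosure w) ++ [x]).length ≤ (palClosure (muL x w ++ [x])).length := by
      rw [length_palClosure, palClosure_eq, muL_append, List.length_append,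
        List.length_append, List.length_append, length_muL_rev]
      simp only [List.length_singleton]
      omega
    exact (pal_prefix_eq hRpal hpre (le_antisymm h2 h1)).symm

lemma zblock {x : Bool} : ∀ (w : List Bool) (i : ℕ), (muL x w)[i]? = some (!x) →
    1 ≤ i ∧ (muL x w)[i-1]? = some x := by
  intro w
  induction w with
  | nil => intro i h; simp at h
  | cons c t ih =>
    intro i h
    by_cases hc : c = x
    · rw [muL_cons, hc, muLetter_self] at h ⊢
      rw [show ([x] ++ muL x t) = x :: muL x t from rfl] at h ⊢
      cases i with
      | zero =>
        rw [List.getElem?_cons_zero] at h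
        injection h with h'
        simp at h'
      | succ n =>
        rw [List.getElem?_cons_succ] at h
        obtain ⟨h1, h2⟩ := ih n h
        obtain ⟨m, rfl⟩ : ∃ m, n = m + 1 := ⟨n - 1, by omega⟩
        refine ⟨by omega, ?_⟩
        rw [show m + 1 + 1 - 1 = m + 1 from rfl, List.getElem?_cons_succ]
        simpa using h2
    · rw [muL_cons, muLetter_other hc] at h ⊢
      rw [show ([x, c] ++ muL x t) = x :: c :: muL x t from rfl] at h ⊢
      cases i with
      | zero =>
        rw [List.getElem?_cons_zero] at h
        injection h with h'
        simp at h'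
      | succ n =>
        cases n with
        | zero => exact ⟨le_refl 1, by rw [List.getElem?_cons_zero]⟩
        | succ m =>
          rw [List.getElem?_cons_succ, List.getElem?_cons_succ] at h
          obtain ⟨h1, h2⟩ := ih m h
          obtain ⟨k, rfl⟩ : ∃ k, m = k + 1 := ⟨m - 1, by omega⟩
          refine ⟨by omega, ?_⟩
          rw [show k + 1 + 1 + 1 - 1 = k + 1 + 1 from rfl, List.getElem?_cons_succ,
            List.getElem?_cons_succ]
          simpa using h2

lemma step2 {x z : Bool} (hz : z ≠ x) (p : List Bool) :
    palClosure (muL x (p ++ [z]) ++ [x]) = palClosure (muL x (p ++ [z])) := by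
  have hzx : z = !x := by revert hz; cases z <;> cases x <;> decide
  have hW : muL x (p ++ [z]) = (muL x p ++ [x]) ++ [z] := by
    rw [muL_append]
    simp [muLetter_other hz]
  have hhead : (muL x (p ++ [z])).head? = some x := by
    obtain ⟨r, hr⟩ := muL_head (x := x) (w := p ++ [z]) (by simp)
    rw [hr]; rfl
  have hlast : (muL x (p ++ [z])).getLast? = some z := by
    rw [hW, List.getLast?_concat]
  have hdpos : 1 ≤ pd (muL x (p ++ [z])) := by
    by_contra hcon
    have h0 : pd (muL x (p ++ [z])) = 0 := by omega
    have hpal := pd_spec (muL x (p ++ [z]))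
    rw [h0, List.drop_zero] at hpal
    have := List.head?_reverse (l := muL x (p ++ [z]))
    rw [hpal, hhead, hlast] at this
    injection this with h'
    exact hz h'.symm
  have hdle : pd (muL x (p ++ [z])) ≤ (muL x p ++ [x]).length := by
    apply pd_le'
    rw [hW, List.drop_left]
    rfl
  -- the longest palindromic suffix S
  have hSpal := pd_spec (muL x (p ++ [z]))
  set W := muL x (p ++ [z]) with hWdef
  set n := pd W with hndef
  have hSz : (W.drop n).getLast? = some z := by
    rw [hW, List.drop_append, Nat.sub_eq_zero_of_le hdle,
      List.drop_zero, List.getLast?_concat]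
  have hSheadz : W[n]? = some z := by
    have h1 : (W.drop n).head? = W[n]? := by
      rw [List.head?_eq_getElem?, List.getElem?_drop, Nat.add_zero]
    rw [← h1, ← hSpal, List.head?_reverse, hSz]
  have hblock := zblock (x := x) (p ++ [z]) n (by rw [← hzx]; exact hSheadz)
  have hxprev : W[n-1]? = some x := hblock.2
  -- the palindromic closure extends W by x first
  have htake : ((W.take n).reverse).head? = some x := by
    rw [List.head?_reverse, List.getLast?_eq_getElem?, List.length_take]
    have hnle : n ≤ W.length := pd_le W
    rw [show min n W.length = n by omega]
    rw [List.getElem?_take_of_lt (by omega)]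
    exact hxprev
  obtain ⟨r, hr⟩ : ∃ r, (W.take n).reverse = x :: r := by
    cases hh : (W.take n).reverse with
    | nil => rw [hh] at htake; simp at htake
    | cons a s =>
      rw [hh] at htake
      injection htake with h'
      exact ⟨s, by rw [h']⟩
  apply palClosure_sandwich (w := W) (w' := W ++ [x])
  · exact ⟨[x], rfl⟩
  · rw [palClosure_eq, ← hndef, hr]
    exact ⟨r, by simp⟩


@[simp] lemma psi_nil : psi [] = [] := rfl

lemma psi_append_singleton (v : List Bool) (z : Bool) :
    psi (v ++ [z]) = palClosure (psi v ++ [z]) := by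
  simp [psi, List.foldl_append]

lemma justin (x : Bool) (u : List Bool) :
    psi (x :: u) = muL x (psi u) ++ [x] := by
  induction u using List.reverseRecOn with
  | nil =>
    show psi ([] ++ [x]) = _
    rw [psi_append_singleton]
    simp only [psi_nil, muL_nil, List.nil_append]
    exact palClosure_of_palindrome rfl
  | append_singleton u z ih =>
    have h1 : psi (x :: (u ++ [z])) = palClosure (psi (x :: u) ++ [z]) := by
      rw [show x :: (u ++ [z]) = (x :: u) ++ [z] by rfl, psi_append_singleton]
    rw [h1, ih, psi_append_singleton]
    by_cases hzx : z = x
    · have h2 : muL x (psi u) ++ [x] ++ [z] = muL x (psi u ++ [z]) ++ [x] := by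
        rw [muL_append, hzx]
        simp [muLetter_self]
      rw [h2, key]
    · have h2 : muL x (psi u) ++ [x] ++ [z] = muL x (psi u ++ [z]) := by
        rw [muL_append]
        simp [muLetter_other hzx]
      rw [h2, ← step2 hzx (psi u), key]


lemma fibD_pos (n : ℕ) : 1 ≤ fibD n := by
  induction n using Nat.strong_induction_on with
  | _ n ih =>
    match n with
    | 0 => exact le_refl 1
    | 1 => exact le_refl 1
    | m + 2 =>
      have := ih (m + 1) (by omega)
      simp only [fibD]
      omega

lemma fibD_le_succ (n : ℕ) : fibD n ≤ fibD (n + 1) := by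
  match n with
  | 0 => exact le_refl 1
  | m + 1 =>
    have := fibD_pos m
    simp only [fibD]
    omega

lemma fibD_lt_succ (n : ℕ) : fibD (n + 1) < fibD (n + 2) := by
  have := fibD_pos n
  simp only [fibD]
  omega

def cnt (v : List Bool) (b : Bool) : ℕ := (psi v).count b + 1

lemma cnt_pos (v : List Bool) (b : Bool) : 1 ≤ cnt v b := by simp [cnt]

lemma length_bool (w : List Bool) : w.length = w.count true + w.count false := by
  induction w with
  | nil => rfl
  | cons c t ih =>
    rw [List.length_cons, List.count_cons, List.count_cons, ih]
    cases c <;> simp <;> omega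

lemma cnt_cons_self (x : Bool) (u : List Bool) :
    cnt (x :: u) x = cnt u true + cnt u false := by
  rw [cnt, justin, List.count_append, count_muL_self]
  have h1 : List.count x [x] = 1 := by simp
  rw [h1, length_bool (psi u), cnt, cnt]
  omega

lemma cnt_cons_other (x : Bool) (u : List Bool) :
    cnt (x :: u) (!x) = cnt u (!x) := by
  rw [cnt, justin, List.count_append, count_muL_other]
  have h1 : List.count (!x) [x] = 0 := by cases x <;> decide
  rw [h1, cnt]

lemma sum_xy (v : List Bool) (x : Bool) :
    cnt v true + cnt v false = cnt v x + cnt v (!x) := by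
  cases x
  · simp [Nat.add_comm]
  · simp

lemma bool_eq_or (y x : Bool) : y = x ∨ y = !x := by cases y <;> cases x <;> simp

lemma ne_not_self (x : Bool) : x ≠ !x := by cases x <;> decide

lemma psi_replicate (k : ℕ) (x : Bool) : psi (List.replicate k x) = List.replicate k x := by
  induction k with
  | zero => rfl
  | succ n ih =>
    rw [List.replicate_succ', psi_append_singleton, ih, ← List.replicate_succ']
    exact palClosure_of_palindrome (List.reverse_replicate (n := n.succ) (a := x))

lemma cnt_replicate_other {x y : Bool} (k : ℕ) (h : y ≠ x) :
    cnt (List.replicate k x) y = 1 := by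
  rw [cnt, psi_replicate]
  have h0 : List.count y (List.replicate k x) = 0 := by
    rw [List.count_eq_zero]
    intro hmem
    exact h (List.eq_of_mem_replicate hmem)
  omega

lemma fibD_add2 (m : ℕ) : fibD (m + 2) = fibD (m + 1) + fibD m := by simp [fibD]

lemma main (v : List Bool) :
    (v.length + 2 ≤ cnt v true + cnt v false) ∧
    (∀ y, cnt v y ≤ fibD (v.length + 1)) ∧
    (cnt v true + cnt v false ≤ fibD (v.length + 2)) ∧
    (cnt v true + cnt v false = v.length + 2 → ∃ x, v = List.replicate v.length x) ∧
    (cnt v true + cnt v false = fibD (v.length + 2) → v.Chain' (· ≠ ·)) ∧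
    (∀ y, cnt v true + cnt v false = fibD (v.length + 2) → cnt v y = fibD (v.length + 1) →
      v = [] ∨ (v.Chain' (· ≠ ·) ∧ v.head? = some y)) ∧
    (v.Chain' (· ≠ ·) → ∀ y, v.head? = some y →
      cnt v y = fibD (v.length + 1) ∧ cnt v (!y) = fibD v.length) := by
  induction v with
  | nil =>
    refine ⟨le_refl 2, fun y => by cases y <;> exact le_refl 1, le_refl 2,
      fun _ => ⟨true, rfl⟩, fun _ => List.isChain_nil, fun y _ _ => Or.inl rfl,
      fun _ y hy => by simp at hy⟩
  | cons x u ih =>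
    obtain ⟨ih1, ih2, ih3, ih4, ih5, ih6, ih7⟩ := ih
    set k := u.length with hk
    have hlen : (x :: u).length = k + 1 := rfl
    have hx : cnt (x :: u) x = cnt u true + cnt u false := cnt_cons_self x u
    have hnx : cnt (x :: u) (!x) = cnt u (!x) := cnt_cons_other x u
    have hsum : cnt (x :: u) true + cnt (x :: u) false
        = (cnt u true + cnt u false) + cnt u (!x) := by
      rw [sum_xy (x :: u) x, hx, hnx]
    have hsumu : cnt u true + cnt u false = cnt u x + cnt u (!x) := sum_xy u x
    have e11 : fibD (k + 1 + 1) = fibD (k + 2) := by rw [show k + 1 + 1 = k + 2 from rfl]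
    have e12 : fibD (k + 1 + 2) = fibD (k + 2) + fibD (k + 1) := by
      rw [fibD_add2 (k + 1), e11]
    have e20 : fibD (k + 2) = fibD (k + 1) + fibD k := fibD_add2 k
    have hchain_mk : u.head? = some (!x) → u.Chain' (· ≠ ·) → (x :: u).Chain' (· ≠ ·) := by
      intro hh hc
      show List.IsChain _ (x :: u)
      rw [List.isChain_cons]
      refine ⟨?_, hc⟩
      intro b hb
      rw [hh] at hb
      simp only [Option.mem_def, Option.some.injEq] at hb
      rw [← hb]
      exact ne_not_self x
    refine ⟨?_, ?_, ?_, ?_, ?_, ?_, ?_⟩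
    · -- lower bound
      have := cnt_pos u (!x)
      rw [hsum, hlen]
      omega
    · -- individual upper bounds
      intro y
      rw [hlen]
      rcases bool_eq_or y x with rfl | rfl
      · rw [hx, e11]; exact ih3
      · rw [hnx, e11]
        exact le_trans (ih2 (!x)) (le_trans (fibD_le_succ (k + 1)) (le_of_eq e11))
    · -- sum upper bound
      rw [hsum, hlen]
      have h2 := ih2 (!x)
      have h3 := ih3
      omega
    · -- equality lower
      intro hEq
      rw [hsum, hlen] at hEq
      have hc1 := cnt_pos u (!x)
      have hsu : cnt u true + cnt u false = k + 2 := by omega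
      have hcnx : cnt u (!x) = 1 := by omega
      obtain ⟨x0, hx0⟩ := ih4 hsu
      rcases Nat.eq_zero_or_pos k with hk0 | hkpos
      · rw [hlen, hk0]
        refine ⟨x, ?_⟩
        have hu0 : u = [] := by rw [hx0, hk0]; rfl
        rw [hu0]
        rfl
      · have hxx0 : x0 = x := by
          by_contra hne
          have hbx : (!x) = x0 := by
            rcases bool_eq_or x0 x with h' | h'
            · exact absurd h' hne
            · rw [h']
          rw [hx0, ← hbx] at hcnx
          rw [cnt, psi_replicate, List.count_replicate_self] at hcnx
          omega
        refine ⟨x, ?_⟩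
        rw [hlen, hx0, hxx0, ← List.replicate_succ]
    · -- equality upper implies chain
      intro hEq
      rw [hsum, hlen] at hEq
      have h2 := ih2 (!x)
      have h3 := ih3
      have hsu : cnt u true + cnt u false = fibD (k + 2) := by omega
      have hcnx : cnt u (!x) = fibD (k + 1) := by omega
      rcases ih6 (!x) hsu hcnx with rfl | ⟨hcu, hhu⟩
      · exact List.isChain_singleton x
      · exact hchain_mk hhu hcu
    · -- equality upper with component
      intro y hEq hcy
      rw [hsum, hlen] at hEq
      have h2 := ih2 (!x)
      have h3 := ih3
      have hsu : cnt u true + cnt u false = fibD (k + 2) := by omega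
      have hcnx : cnt u (!x) = fibD (k + 1) := by omega
      have hchain : (x :: u).Chain' (· ≠ ·) := by
        rcases ih6 (!x) hsu hcnx with rfl | ⟨hcu, hhu⟩
        · exact List.isChain_singleton x
        · exact hchain_mk hhu hcu
      rcases bool_eq_or y x with rfl | rfl
      · exact Or.inr ⟨hchain, rfl⟩
      · exfalso
        rw [hlen, hnx] at hcy
        have hlt := fibD_lt_succ k
        have hle2 := ih2 (!x)
        omega
    · -- chain gives exact values
      intro hchain y hy
      have hyx : y = x := by injection hy with h'; exact h'.symm
      subst hyx
      rw [hlen, hx, hnx]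
      cases u with
      | nil =>
        constructor
        · rfl
        · rfl
      | cons c u' =>
        have hcx : c = !y := by
          change List.IsChain _ (y :: c :: u') at hchain
          rw [List.isChain_cons_cons] at hchain
          rcases bool_eq_or c y with h' | h'
          · exact absurd h'.symm hchain.1
          · exact h'
        have hhu : (c :: u').head? = some (!y) := by simp [hcx]
        have hch : (c :: u').Chain' (· ≠ ·) := (List.isChain_cons_cons.mp hchain).2
        obtain ⟨e1, e2⟩ := ih7 hch (!y) hhu
        rw [Bool.not_not] at e2
        constructor
        · rw [hsumu, e1, e2, e11, e20]
          omega
        · exact e1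

theorem psi_length_bounds (v : List Bool) :
    (v.length + 2 ≤ (psi v).length + 2 ∧ (psi v).length + 2 ≤ fibD (v.length + 2)) ∧
    ((psi v).length + 2 = v.length + 2 ↔ ∃ x, v = List.replicate v.length x) ∧
    ((psi v).length + 2 = fibD (v.length + 2) ↔ v.Chain' (· ≠ ·)) := by
  obtain ⟨m1, m2, m3, m4, m5, m6, m7⟩ := main v
  have hs : (psi v).length + 2 = cnt v true + cnt v false := by
    rw [cnt, cnt, length_bool (psi v)]
    omega
  refine ⟨⟨by omega, by omega⟩, ⟨fun h => m4 (by omega), ?_⟩, ⟨fun h => m5 (by omega), ?_⟩⟩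
  · rintro ⟨x, hxv⟩
    rw [hxv, psi_replicate, List.length_replicate]
  · intro hch
    cases v with
    | nil => rfl
    | cons x u =>
      obtain ⟨g1, g2⟩ := m7 hch x rfl
      have hxy := sum_xy (x :: u) x
      have hf := fibD_add2 ((x :: u).length)
      omega
end

section
/- For every k ≥ 1, F_k = s((2^{k+2} + (−1)^{k+1})/3) = s((5·2^k + (−1)^k)/3), where s is Stern's diatomic sequence and (F_k) the Fibonacci sequence with F_{−1} = F_0 = 1 (note the arguments are integers). -/
def aN : ℕ → ℕ
  | 0 => 1
  | k + 1 => if k % 2 = 0 then 2 * aN k + 1 else 2 * aN k - 1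

def bN : ℕ → ℕ
  | 0 => 2
  | k + 1 => if k % 2 = 0 then 2 * bN k - 1 else 2 * bN k + 1

lemma stern_one : stern 1 = 1 := by rw [stern]

lemma stern_two : stern 2 = 1 := by
  rw [stern]; norm_num; exact stern_one

lemma stern_two_mul (n : ℕ) : stern (2 * n) = stern n := by
  match n with
  | 0 => rfl
  | n + 1 =>
    rw [show 2 * (n + 1) = 2 * n + 2 from by ring, stern, if_pos (by omega)]
    congr 1; omega

lemma stern_two_mul_add_one (n : ℕ) : stern (2 * n + 1) = stern n + stern (n + 1) := by
  match n with
  | 0 => rw [show 2 * 0 + 1 = 1 from rfl, stern_one, show stern 0 = 0 by rw [stern]]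
  | n + 1 =>
    rw [show 2 * (n + 1) + 1 = 2 * n + 1 + 2 from by ring, stern, if_neg (by omega)]
    have e : (2 * n + 1 + 2) / 2 = n + 1 := by omega
    rw [e]

lemma aN_pos (k : ℕ) : 1 ≤ aN k := by
  induction k with
  | zero => simp [aN]
  | succ k ih => rw [aN]; split <;> omega

lemma bN_pos (k : ℕ) : 1 ≤ bN k := by
  induction k with
  | zero => simp [bN]
  | succ k ih => rw [bN]; split <;> omega

lemma key_a (k : ℕ) : stern (aN k) = fibD (k + 1) ∧
    stern (if k % 2 = 0 then aN k + 1 else aN k - 1) = fibD k := by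
  induction k with
  | zero =>
    refine ⟨?_, ?_⟩ <;> simp [aN, fibD, stern_one, stern_two]
  | succ k ih =>
    obtain ⟨h1, h2⟩ := ih
    have hp := aN_pos k
    rcases Nat.even_or_odd k with he | ho
    · have hk0 : k % 2 = 0 := Nat.even_iff.mp he
      have ha : aN (k + 1) = 2 * aN k + 1 := by rw [aN]; simp [hk0]
      rw [hk0, if_pos rfl] at h2
      have hk1 : (k + 1) % 2 = 0 ↔ False := by simp; omega
      constructor
      · rw [ha, stern_two_mul_add_one, h1, h2, fibD]
      · simp only [hk1, if_false]
        have : aN (k + 1) - 1 = 2 * aN k := by omega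
        rw [this, stern_two_mul, h1]
    · have hk0 : k % 2 = 1 := Nat.odd_iff.mp ho
      have ha : aN (k + 1) = 2 * aN k - 1 := by rw [aN]; simp [hk0]
      rw [if_neg (by omega)] at h2
      have hk1 : (k + 1) % 2 = 0 := by omega
      constructor
      · have : aN (k + 1) = 2 * (aN k - 1) + 1 := by omega
        rw [this, stern_two_mul_add_one, h2]
        have : aN k - 1 + 1 = aN k := by omega
        rw [this, h1, fibD, Nat.add_comm]
      · rw [if_pos hk1]
        have : aN (k + 1) + 1 = 2 * aN k := by omega
        rw [this, stern_two_mul, h1]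

lemma key_b (k : ℕ) : stern (bN k) = fibD (k + 1) ∧
    stern (if k % 2 = 0 then bN k - 1 else bN k + 1) = fibD k := by
  induction k with
  | zero =>
    refine ⟨?_, ?_⟩ <;> simp [bN, fibD, stern_one, stern_two]
  | succ k ih =>
    obtain ⟨h1, h2⟩ := ih
    have hp := bN_pos k
    rcases Nat.even_or_odd k with he | ho
    · have hk0 : k % 2 = 0 := Nat.even_iff.mp he
      have hb : bN (k + 1) = 2 * bN k - 1 := by rw [bN]; simp [hk0]
      rw [if_pos hk0] at h2
      constructor
      · have : bN (k + 1) = 2 * (bN k - 1) + 1 := by omega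
        rw [this, stern_two_mul_add_one, h2]
        have : bN k - 1 + 1 = bN k := by omega
        rw [this, h1, fibD, Nat.add_comm]
      · rw [if_neg (by omega)]
        have : bN (k + 1) + 1 = 2 * bN k := by omega
        rw [this, stern_two_mul, h1]
    · have hk0 : k % 2 = 1 := Nat.odd_iff.mp ho
      have hb : bN (k + 1) = 2 * bN k + 1 := by rw [bN]; simp [hk0]
      rw [if_neg (by omega)] at h2
      constructor
      · rw [hb, stern_two_mul_add_one, h1, h2, fibD]
      · rw [if_pos (by omega)]
        have : bN (k + 1) - 1 = 2 * bN k := by omega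
        rw [this, stern_two_mul, h1]

lemma aN_val (k : ℕ) : 3 * (aN k : ℤ) = 2 ^ (k + 2) + (-1) ^ (k + 1) := by
  induction k with
  | zero => simp [aN]
  | succ k ih =>
    have hp := aN_pos k
    rcases Nat.even_or_odd k with he | ho
    · have hk0 : k % 2 = 0 := Nat.even_iff.mp he
      have ha : aN (k + 1) = 2 * aN k + 1 := by rw [aN]; simp [hk0]
      have e1 : (-1 : ℤ) ^ (k + 1) = -1 := by
        rw [Odd.neg_one_pow]; exact Even.add_one he
      have e2 : (-1 : ℤ) ^ (k + 2) = 1 := by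
        rw [Even.neg_one_pow]; exact he.add (by decide)
      rw [ha]; push_cast; rw [e2]; rw [e1] at ih; ring_nf; ring_nf at ih; omega
    · have hk0 : k % 2 = 1 := Nat.odd_iff.mp ho
      have ha : aN (k + 1) = 2 * aN k - 1 := by rw [aN]; simp [hk0]
      have e1 : (-1 : ℤ) ^ (k + 1) = 1 := by
        rw [Even.neg_one_pow]; exact ho.add_one
      have e2 : (-1 : ℤ) ^ (k + 2) = -1 := by
        rw [Odd.neg_one_pow]; exact ho.add_even (by decide)
      have : (aN (k + 1) : ℤ) = 2 * aN k - 1 := by rw [ha]; omega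
      rw [this, e2]; rw [e1] at ih; ring_nf; ring_nf at ih; omega

lemma bN_val (k : ℕ) : 3 * (bN k : ℤ) = 5 * 2 ^ k + (-1) ^ k := by
  induction k with
  | zero => simp [bN]
  | succ k ih =>
    have hp := bN_pos k
    rcases Nat.even_or_odd k with he | ho
    · have hk0 : k % 2 = 0 := Nat.even_iff.mp he
      have hb : bN (k + 1) = 2 * bN k - 1 := by rw [bN]; simp [hk0]
      have e1 : (-1 : ℤ) ^ k = 1 := Even.neg_one_pow he
      have e2 : (-1 : ℤ) ^ (k + 1) = -1 := Odd.neg_one_pow (Even.add_one he)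
      have : (bN (k + 1) : ℤ) = 2 * bN k - 1 := by rw [hb]; omega
      rw [this, e2]; rw [e1] at ih; ring_nf; ring_nf at ih; omega
    · have hk0 : k % 2 = 1 := Nat.odd_iff.mp ho
      have hb : bN (k + 1) = 2 * bN k + 1 := by rw [bN]; simp [hk0]
      have e1 : (-1 : ℤ) ^ k = -1 := Odd.neg_one_pow ho
      have e2 : (-1 : ℤ) ^ (k + 1) = 1 := Even.neg_one_pow ho.add_one
      rw [hb]; push_cast; rw [e2]; rw [e1] at ih; ring_nf; ring_nf at ih; omega

theorem fib_eq_stern (k : ℕ) (hk : 1 ≤ k) :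
    (fibD (k + 1) : ℤ) = stern ((((2 : ℤ) ^ (k + 2) + (-1) ^ (k + 1)) / 3).toNat) ∧
    (fibD (k + 1) : ℤ) = stern (((5 * (2 : ℤ) ^ k + (-1) ^ k) / 3).toNat) := by
  have ha : (((2 : ℤ) ^ (k + 2) + (-1) ^ (k + 1)) / 3).toNat = aN k := by
    rw [← aN_val k, Int.mul_ediv_cancel_left _ (by norm_num), Int.toNat_natCast]
  have hb : ((5 * (2 : ℤ) ^ k + (-1) ^ k) / 3).toNat = bN k := by
    rw [← bN_val k, Int.mul_ediv_cancel_left _ (by norm_num), Int.toNat_natCast]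
  rw [ha, hb, (key_a k).1, (key_b k).1]
  exact ⟨rfl, rfl⟩
end
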